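/- For every ρ ∈ (−1,1) with ρ ≠ 0 and every x ∈ ℝ, sup_{y ∈ ℝ} |G(y)| = |G(y*)|. -/

import Mathlib

open MeasureTheory Real

/-- The standard normal density `φ(u) = (2π)^{-1/2} exp(-u²/2)`. -/
noncomputable def stdNormalPDF (u : ℝ) : ℝ := (Real.sqrt (2 * π))⁻¹ * Real.exp (-u ^ 2 / 2)

/-- The standard normal CDF `Φ(x) = ∫_{-∞}^x φ(u) du`. -/
noncomputable def stdNormalCDF (x : ℝ) : ℝ := ∫ u in Set.Iic x, stdNormalPDF u

/-- `G(y) = Φ(x)Φ(y) − ∫_{−∞}^{y} Φ((x − ρu)/√(1−ρ²)) φ(u) du`. -/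
noncomputable def Gfun (ρ x y : ℝ) : ℝ :=
  stdNormalCDF x * stdNormalCDF y
    - ∫ u in Set.Iic y, stdNormalCDF ((x - ρ * u) / Real.sqrt (1 - ρ ^ 2)) * stdNormalPDF u

/-- `y* = x(1 − √(1−ρ²))/ρ`. -/
noncomputable def ystar (ρ x : ℝ) : ℝ := x * (1 - Real.sqrt (1 - ρ ^ 2)) / ρ

/-!
By the fundamental theorem of calculus `G'(y) = φ(y) (Φ(x) - Φ((x - ρy)/√(1-ρ²)))`, and
`(x - ρy)/√(1-ρ²) = x + ρ (y* - y)/√(1-ρ²)`, so `ρ G` decreases on `(-∞, y*]` and increases on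
`[y*, ∞)`. Moreover `G` tends to `0` at both ends: at `+∞` because
`∫ Φ((x - au)/b) φ(u) du = Φ(x)` whenever `a² + b² = 1` (the law of `aZ + bZ'` is standard
normal), which follows by differentiating in `x` and completing the square. Hence `ρ G ≤ 0`,
with its minimum at `y*`.
-/

open Filter Set ProbabilityTheory Topology

section IntegralIic

variable {E : Type*} [NormedAddCommGroup E] [NormedSpace ℝ E] {f : ℝ → E}

theorem hasDerivAt_integral_Iic [CompleteSpace E] (hf : Integrable f) (hc : Continuous f)
    (y : ℝ) : HasDerivAt (fun z => ∫ u in Iic z, f u) (f y) y := by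
  have hsplit : (fun z => ∫ u in Iic z, f u)
      = fun z => (∫ u in Iic 0, f u) + ∫ u in (0 : ℝ)..z, f u := by
    ext z
    rw [← intervalIntegral.integral_Iic_sub_Iic hf.integrableOn hf.integrableOn]
    abel
  rw [hsplit]
  exact (intervalIntegral.integral_hasDerivAt_right hf.intervalIntegrable
    (hc.stronglyMeasurableAtFilter _ _) hc.continuousAt).const_add _

theorem tendsto_integral_Iic_atTop (hf : Integrable f) :
    Tendsto (fun z => ∫ u in Iic z, f u) atTop (𝓝 (∫ u, f u)) := by
  simpa [iUnion_Iic] using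
    tendsto_setIntegral_of_monotone (μ := volume) (fun _ => measurableSet_Iic)
      (fun _ _ h => Iic_subset_Iic.2 h) hf.integrableOn

end IntegralIic

theorem eq_of_hasDerivAt_of_tendsto_atBot {f g f' : ℝ → ℝ} {l : ℝ}
    (hf : ∀ x, HasDerivAt f (f' x) x) (hg : ∀ x, HasDerivAt g (f' x) x)
    (hfl : Tendsto f atBot (𝓝 l)) (hgl : Tendsto g atBot (𝓝 l)) : f = g := by
  have hderiv : ∀ x, HasDerivAt (f - g) 0 x := fun x => by simpa using (hf x).sub (hg x)
  have hconst : ∀ x, (f - g) x = (f - g) 0 := fun x =>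
    is_const_of_deriv_eq_zero (fun y => (hderiv y).differentiableAt) (fun y => (hderiv y).deriv)
      x 0
  have hzero : (f - g) 0 = 0 := by
    refine tendsto_nhds_unique ?_ (by simpa using hfl.sub hgl)
    exact tendsto_const_nhds.congr fun x => (hconst x).symm
  ext x
  simpa [sub_eq_zero, hzero] using hconst x

theorem abs_le_abs_of_antitoneOn_of_monotoneOn {G : ℝ → ℝ} {c : ℝ}
    (hbot : Tendsto G atBot (𝓝 0)) (htop : Tendsto G atTop (𝓝 0))
    (hanti : AntitoneOn G (Iic c)) (hmono : MonotoneOn G (Ici c)) (y : ℝ) :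
    |G y| ≤ |G c| := by
  have hnonpos : ∀ z, G z ≤ 0 := fun z => by
    rcases le_total z c with h | h
    · exact ge_of_tendsto hbot (eventually_atBot.2 ⟨z, fun t ht => hanti (ht.trans h) h ht⟩)
    · exact ge_of_tendsto htop (eventually_atTop.2 ⟨z, fun t ht => hmono h (h.trans ht) ht⟩)
  have hmin : G c ≤ G y := by
    rcases le_total y c with h | h
    · exact hanti h (mem_Iic.2 le_rfl) h
    · exact hmono (mem_Ici.2 le_rfl) h h
  rw [abs_of_nonpos (hnonpos y), abs_of_nonpos (hnonpos c)]
  linarith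

theorem stdNormalPDF_eq_gaussianPDFReal : stdNormalPDF = gaussianPDFReal 0 1 := by
  ext u
  simp [stdNormalPDF, gaussianPDFReal]

theorem stdNormalPDF_pos (u : ℝ) : 0 < stdNormalPDF u := by
  unfold stdNormalPDF
  positivity

theorem stdNormalPDF_le (u : ℝ) : stdNormalPDF u ≤ (√(2 * π))⁻¹ := by
  unfold stdNormalPDF
  refine mul_le_of_le_one_right (by positivity) (Real.exp_le_one_iff.2 ?_)
  nlinarith [sq_nonneg u]

theorem continuous_stdNormalPDF : Continuous stdNormalPDF := by
  unfold stdNormalPDF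
  fun_prop

theorem integrable_stdNormalPDF : Integrable stdNormalPDF := by
  rw [stdNormalPDF_eq_gaussianPDFReal]
  exact integrable_gaussianPDFReal 0 1

theorem stdNormalCDF_eq_cdf : stdNormalCDF = cdf (gaussianReal 0 1) := by
  ext x
  rw [cdf_eq_real, measureReal_def, gaussianReal_apply_eq_integral 0 one_ne_zero,
    ENNReal.toReal_ofReal
      (setIntegral_nonneg measurableSet_Iic fun u _ => gaussianPDFReal_nonneg 0 1 u),
    stdNormalCDF, stdNormalPDF_eq_gaussianPDFReal]

theorem stdNormalCDF_nonneg (x : ℝ) : 0 ≤ stdNormalCDF x :=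
  stdNormalCDF_eq_cdf ▸ cdf_nonneg _ x

theorem stdNormalCDF_le_one (x : ℝ) : stdNormalCDF x ≤ 1 := stdNormalCDF_eq_cdf ▸ cdf_le_one _ x

theorem monotone_stdNormalCDF : Monotone stdNormalCDF := stdNormalCDF_eq_cdf ▸ monotone_cdf _

theorem tendsto_stdNormalCDF_atBot : Tendsto stdNormalCDF atBot (𝓝 0) :=
  stdNormalCDF_eq_cdf ▸ tendsto_cdf_atBot _

theorem tendsto_stdNormalCDF_atTop : Tendsto stdNormalCDF atTop (𝓝 1) :=
  stdNormalCDF_eq_cdf ▸ tendsto_cdf_atTop _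

theorem hasDerivAt_stdNormalCDF (x : ℝ) : HasDerivAt stdNormalCDF (stdNormalPDF x) x :=
  hasDerivAt_integral_Iic integrable_stdNormalPDF continuous_stdNormalPDF x

theorem continuous_stdNormalCDF : Continuous stdNormalCDF :=
  continuous_iff_continuousAt.2 fun x => (hasDerivAt_stdNormalCDF x).continuousAt

section AffineMixture

variable {a b : ℝ}

theorem continuous_stdNormalCDF_affine_mul (x : ℝ) :
    Continuous fun u => stdNormalCDF ((x - a * u) / b) * stdNormalPDF u := by
  have := continuous_stdNormalCDF; have := continuous_stdNormalPDF
  fun_prop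

theorem norm_stdNormalCDF_mul_stdNormalPDF_le (t u : ℝ) :
    ‖stdNormalCDF t * stdNormalPDF u‖ ≤ stdNormalPDF u := by
  rw [norm_mul, Real.norm_of_nonneg (stdNormalCDF_nonneg t),
    Real.norm_of_nonneg (stdNormalPDF_pos u).le]
  exact mul_le_of_le_one_left (stdNormalPDF_pos u).le (stdNormalCDF_le_one t)

theorem integrable_stdNormalCDF_affine_mul (x : ℝ) :
    Integrable fun u => stdNormalCDF ((x - a * u) / b) * stdNormalPDF u :=
  integrable_stdNormalPDF.mono' (continuous_stdNormalCDF_affine_mul x).aestronglyMeasurable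
    (Eventually.of_forall fun u => norm_stdNormalCDF_mul_stdNormalPDF_le _ u)

theorem stdNormalPDF_affine_mul_stdNormalPDF (hb : 0 < b) (hab : a ^ 2 + b ^ 2 = 1)
    (x u : ℝ) : b⁻¹ * stdNormalPDF ((x - a * u) / b) * stdNormalPDF u
      = stdNormalPDF x * gaussianPDFReal (a * x) (b ^ 2).toNNReal u := by
  have hsqrt : √(2 * π * (b ^ 2).toNNReal) = √(2 * π) * b := by
    rw [Real.coe_toNNReal _ (sq_nonneg b), Real.sqrt_mul (by positivity), Real.sqrt_sq hb.le]
  have hexp : rexp (-((x - a * u) / b) ^ 2 / 2) * rexp (-u ^ 2 / 2)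
      = rexp (-x ^ 2 / 2) * rexp (-(u - a * x) ^ 2 / (2 * (b ^ 2).toNNReal)) := by
    rw [← Real.exp_add, ← Real.exp_add, Real.coe_toNNReal _ (sq_nonneg b)]
    congr 1
    field_simp
    linear_combination (x ^ 2 - u ^ 2) * hab
  simp only [stdNormalPDF, gaussianPDFReal, hsqrt, mul_inv]
  linear_combination (b⁻¹ * (√(2 * π))⁻¹ * (√(2 * π))⁻¹) * hexp

theorem integral_stdNormalPDF_affine_mul_stdNormalPDF (hb : 0 < b) (hab : a ^ 2 + b ^ 2 = 1)
    (x : ℝ) : ∫ u, b⁻¹ * stdNormalPDF ((x - a * u) / b) * stdNormalPDF u = stdNormalPDF x := by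
  simp_rw [stdNormalPDF_affine_mul_stdNormalPDF hb hab x]
  rw [integral_const_mul, integral_gaussianPDFReal_eq_one _ (by positivity), mul_one]

theorem hasDerivAt_integral_stdNormalCDF_affine_mul (hb : 0 < b) (hab : a ^ 2 + b ^ 2 = 1)
    (x : ℝ) : HasDerivAt (fun x => ∫ u, stdNormalCDF ((x - a * u) / b) * stdNormalPDF u)
      (stdNormalPDF x) x := by
  have hderiv : ∀ x' u, HasDerivAt (fun x => stdNormalCDF ((x - a * u) / b) * stdNormalPDF u)
      (b⁻¹ * stdNormalPDF ((x' - a * u) / b) * stdNormalPDF u) x' := fun x' u => by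
    have hinner : HasDerivAt (fun x => (x - a * u) / b) b⁻¹ x' := by
      simpa [div_eq_mul_inv] using ((hasDerivAt_id x').sub_const (a * u)).div_const b
    exact (((hasDerivAt_stdNormalCDF _).comp x' hinner).mul_const (stdNormalPDF u)).congr_deriv
      (by ring)
  have hbound : ∀ x' u, ‖b⁻¹ * stdNormalPDF ((x' - a * u) / b) * stdNormalPDF u‖
      ≤ b⁻¹ * (√(2 * π))⁻¹ * stdNormalPDF u := fun x' u => by
    have hu := stdNormalPDF_pos u
    have hv := stdNormalPDF_pos ((x' - a * u) / b)
    rw [Real.norm_of_nonneg (by positivity)]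
    gcongr
    exact stdNormalPDF_le _
  have key := hasDerivAt_integral_of_dominated_loc_of_deriv_le (Metric.ball_mem_nhds x one_pos)
    (Eventually.of_forall fun x' => (continuous_stdNormalCDF_affine_mul x').aestronglyMeasurable)
    (integrable_stdNormalCDF_affine_mul x)
    (by have := continuous_stdNormalPDF; exact Continuous.aestronglyMeasurable (by fun_prop))
    (Eventually.of_forall fun u x' _ => hbound x' u) (integrable_stdNormalPDF.const_mul _)
    (Eventually.of_forall fun u x' _ => hderiv x' u)
  rw [← integral_stdNormalPDF_affine_mul_stdNormalPDF hb hab x]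
  exact key.2

theorem tendsto_integral_stdNormalCDF_affine_mul_atBot (hb : 0 < b) :
    Tendsto (fun x => ∫ u, stdNormalCDF ((x - a * u) / b) * stdNormalPDF u) atBot (𝓝 0) := by
  have hlim : ∀ u,
      Tendsto (fun x => stdNormalCDF ((x - a * u) / b) * stdNormalPDF u) atBot (𝓝 0) := fun u => by
      have harg : Tendsto (fun x => (x - a * u) / b) atBot atBot :=
        (tendsto_atBot_add_const_right _ _ tendsto_id).atBot_div_const hb
      simpa using (tendsto_stdNormalCDF_atBot.comp harg).mul_const (stdNormalPDF u)
  simpa using tendsto_integral_filter_of_dominated_convergence stdNormalPDF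
    (Eventually.of_forall fun x => (continuous_stdNormalCDF_affine_mul x).aestronglyMeasurable)
    (Eventually.of_forall fun x => Eventually.of_forall fun u =>
      norm_stdNormalCDF_mul_stdNormalPDF_le _ u)
    integrable_stdNormalPDF (Eventually.of_forall hlim)

theorem integral_stdNormalCDF_affine_mul_stdNormalPDF (hb : 0 < b) (hab : a ^ 2 + b ^ 2 = 1)
    (x : ℝ) : ∫ u, stdNormalCDF ((x - a * u) / b) * stdNormalPDF u = stdNormalCDF x :=
  congrFun (eq_of_hasDerivAt_of_tendsto_atBot
    (hasDerivAt_integral_stdNormalCDF_affine_mul hb hab) hasDerivAt_stdNormalCDF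
    (tendsto_integral_stdNormalCDF_affine_mul_atBot hb) tendsto_stdNormalCDF_atBot) x

end AffineMixture

theorem Monotone.mul_sub_apply_add_mul_nonpos {f : ℝ → ℝ} (hf : Monotone f) (x c : ℝ) {t : ℝ}
    (ht : 0 ≤ t) : c * (f x - f (x + c * t)) ≤ 0 := by
  rcases le_total 0 c with hc | hc
  · exact mul_nonpos_of_nonneg_of_nonpos hc (sub_nonpos.2 (hf (by nlinarith)))
  · exact mul_nonpos_of_nonpos_of_nonneg hc (sub_nonneg.2 (hf (by nlinarith)))

section Gfun

variable {ρ x : ℝ}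

theorem hasDerivAt_Gfun (y : ℝ) : HasDerivAt (Gfun ρ x)
    (stdNormalPDF y * (stdNormalCDF x - stdNormalCDF ((x - ρ * y) / √(1 - ρ ^ 2)))) y :=
  (((hasDerivAt_stdNormalCDF y).const_mul (stdNormalCDF x)).sub
    (hasDerivAt_integral_Iic (integrable_stdNormalCDF_affine_mul x)
      (continuous_stdNormalCDF_affine_mul x) y)).congr_deriv (by ring)

theorem tendsto_Gfun_atBot : Tendsto (Gfun ρ x) atBot (𝓝 0) := by
  have h := (tendsto_stdNormalCDF_atBot.const_mul (stdNormalCDF x)).sub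
    (tendsto_integral_Iic_zero (μ := volume) (f := fun u =>
      stdNormalCDF ((x - ρ * u) / √(1 - ρ ^ 2)) * stdNormalPDF u) tendsto_id)
  rwa [mul_zero, sub_zero] at h

theorem tendsto_Gfun_atTop (hρ : ρ ^ 2 < 1) : Tendsto (Gfun ρ x) atTop (𝓝 0) := by
  have h := (tendsto_stdNormalCDF_atTop.const_mul (stdNormalCDF x)).sub
    (tendsto_integral_Iic_atTop
      (integrable_stdNormalCDF_affine_mul (a := ρ) (b := √(1 - ρ ^ 2)) x))
  rwa [integral_stdNormalCDF_affine_mul_stdNormalPDF (Real.sqrt_pos.2 (by linarith))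
    (by rw [Real.sq_sqrt (by linarith)]; ring), mul_one, sub_self] at h

theorem div_sqrt_eq_add_ystar (hρ : ρ ^ 2 < 1) (hρ0 : ρ ≠ 0) (y : ℝ) :
    (x - ρ * y) / √(1 - ρ ^ 2) = x + ρ * ((ystar ρ x - y) / √(1 - ρ ^ 2)) := by
  have hs : 0 < √(1 - ρ ^ 2) := Real.sqrt_pos.2 (by linarith)
  unfold ystar
  field_simp
  ring

theorem hasDerivAt_mul_Gfun (hρ : ρ ^ 2 < 1) (hρ0 : ρ ≠ 0) (y : ℝ) :
    HasDerivAt (fun y => ρ * Gfun ρ x y) (stdNormalPDF y * (ρ * (stdNormalCDF x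
      - stdNormalCDF (x + ρ * ((ystar ρ x - y) / √(1 - ρ ^ 2)))))) y :=
  ((hasDerivAt_Gfun y).const_mul ρ).congr_deriv (by rw [div_sqrt_eq_add_ystar hρ hρ0]; ring)

theorem antitoneOn_mul_Gfun (hρ : ρ ^ 2 < 1) (hρ0 : ρ ≠ 0) :
    AntitoneOn (fun y => ρ * Gfun ρ x y) (Iic (ystar ρ x)) := by
  refine antitoneOn_of_deriv_nonpos (convex_Iic _)
    (HasDerivAt.continuousOn fun y _ => hasDerivAt_mul_Gfun hρ hρ0 y)
    (fun y _ => (hasDerivAt_mul_Gfun hρ hρ0 y).differentiableAt.differentiableWithinAt)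
    fun y hy => ?_
  rw [interior_Iic] at hy
  rw [(hasDerivAt_mul_Gfun hρ hρ0 y).deriv]
  exact mul_nonpos_of_nonneg_of_nonpos (stdNormalPDF_pos y).le
    (monotone_stdNormalCDF.mul_sub_apply_add_mul_nonpos x ρ
      (div_nonneg (sub_nonneg.2 (le_of_lt hy)) (Real.sqrt_nonneg _)))

theorem monotoneOn_mul_Gfun (hρ : ρ ^ 2 < 1) (hρ0 : ρ ≠ 0) :
    MonotoneOn (fun y => ρ * Gfun ρ x y) (Ici (ystar ρ x)) := by
  refine monotoneOn_of_deriv_nonneg (convex_Ici _)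
    (HasDerivAt.continuousOn fun y _ => hasDerivAt_mul_Gfun hρ hρ0 y)
    (fun y _ => (hasDerivAt_mul_Gfun hρ hρ0 y).differentiableAt.differentiableWithinAt)
    fun y hy => ?_
  rw [interior_Ici] at hy
  rw [(hasDerivAt_mul_Gfun hρ hρ0 y).deriv,
    show x + ρ * ((ystar ρ x - y) / √(1 - ρ ^ 2))
      = x + -ρ * ((y - ystar ρ x) / √(1 - ρ ^ 2)) by ring]
  have h := monotone_stdNormalCDF.mul_sub_apply_add_mul_nonpos x (-ρ)
    (div_nonneg (sub_nonneg.2 (le_of_lt hy)) (Real.sqrt_nonneg (1 - ρ ^ 2)))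
  exact mul_nonneg (stdNormalPDF_pos y).le (by linarith)

end Gfun

/-- For every `ρ ∈ (−1,1)` with `ρ ≠ 0` and every `x ∈ ℝ`,
`sup_{y ∈ ℝ} |G(y)| = |G(y*)|`. -/
theorem stmt7 (ρ x : ℝ) (hρ : ρ ∈ Set.Ioo (-1 : ℝ) 1) (hρ0 : ρ ≠ 0) :
    (⨆ y : ℝ, |Gfun ρ x y|) = |Gfun ρ x (ystar ρ x)| := by
  have hρ2 : ρ ^ 2 < 1 := by rwa [sq_lt_one_iff_abs_lt_one, abs_lt]
  have hmax : ∀ y, |Gfun ρ x y| ≤ |Gfun ρ x (ystar ρ x)| := fun y => by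
    have h := abs_le_abs_of_antitoneOn_of_monotoneOn
      (by simpa using (tendsto_Gfun_atBot (x := x)).const_mul ρ)
      (by simpa using (tendsto_Gfun_atTop (x := x) hρ2).const_mul ρ)
      (antitoneOn_mul_Gfun hρ2 hρ0) (monotoneOn_mul_Gfun hρ2 hρ0) y
    simp only [abs_mul] at h
    exact le_of_mul_le_mul_left h (abs_pos.2 hρ0)
  exact le_antisymm (ciSup_le hmax) (le_ciSup ⟨_, forall_mem_range.2 hmax⟩ _)
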